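/- Let a, b : Primes → ℝ be functions on the prime numbers with |a_p| ≤ 2 and |b_p| ≤ 2 for every prime p. Suppose that, as s → 1⁺, Σ_p a_p p^{−s} = O(1), Σ_p b_p p^{−s} = O(1), Σ_p (a_p² − 1) p^{−s} = O(1), Σ_p (b_p² − 1) p^{−s} = O(1), and Σ_p a_p b_p p^{−s} = O(1). Then limsup_{s→1⁺} (Σ_{p : a_p = b_p} p^{−s}) / (Σ_p p^{−s}) ≤ 7/8; that is, the set of primes where a_p = b_p has analytic density at most 7/8. -/

import Mathlib

/-!
Let `S(s) = Σ_p p^{-s}` and let `T(s)` be the same sum over `E = {p : a_p = b_p}`. Since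
`(a_p - b_p)²` vanishes on `E` and is at most `16` off `E`,
`Σ_p (a_p - b_p)² p^{-s} ≤ 16 (S(s) - T(s))`. Expanding the square, the left side is
`Σ (a_p² - 1) p^{-s} + Σ (b_p² - 1) p^{-s} - 2 Σ a_p b_p p^{-s} + 2 S(s) = 2 S(s) + O(1)`.
Hence `16 T ≤ 14 S + O(1)`, and as `S(s) → ∞` when `s → 1⁺`, `limsup T/S ≤ 7/8`.
-/

open Filter Topology

section WeightedSums

variable {ι : Type*} {w : ι → ℝ}

lemma Summable.mul_of_abs_le (hw : Summable w) (hw0 : ∀ i, 0 ≤ w i) {c : ι → ℝ} {C : ℝ}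
    (hc : ∀ i, |c i| ≤ C) : Summable fun i => c i * w i :=
  .of_norm_bounded (hw.mul_left C) fun i => by
    rw [norm_mul, Real.norm_eq_abs, Real.norm_of_nonneg (hw0 i)]
    exact mul_le_mul_of_nonneg_right (hc i) (hw0 i)

lemma tsum_sq_sub_mul_eq (hw : Summable w) (hw0 : ∀ i, 0 ≤ w i) {a b : ι → ℝ} {M : ℝ}
    (ha : ∀ i, |a i| ≤ M) (hb : ∀ i, |b i| ≤ M) :
    ∑' i, (a i - b i) ^ 2 * w i =
      ∑' i, (a i ^ 2 - 1) * w i + ∑' i, (b i ^ 2 - 1) * w i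
        - 2 * ∑' i, a i * b i * w i + 2 * ∑' i, w i := by
  have sq_sub_one : ∀ x : ℝ, |x| ≤ M → |x ^ 2 - 1| ≤ M ^ 2 + 1 := fun x hx => by
    obtain ⟨hx₁, hx₂⟩ := abs_le.mp hx
    exact abs_le.mpr ⟨by nlinarith, by nlinarith⟩
  have hA := hw.mul_of_abs_le hw0 fun i => sq_sub_one _ (ha i)
  have hB := hw.mul_of_abs_le hw0 fun i => sq_sub_one _ (hb i)
  have hC := hw.mul_of_abs_le hw0 (C := M * M) fun i => by
    rw [abs_mul]
    exact mul_le_mul (ha i) (hb i) (abs_nonneg _) ((abs_nonneg _).trans (ha i))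
  rw [← tsum_mul_left, ← tsum_mul_left, ← hA.tsum_add hB, ← (hA.add hB).tsum_sub (hC.mul_left 2),
    ← ((hA.add hB).sub (hC.mul_left 2)).tsum_add (hw.mul_left 2)]
  exact tsum_congr fun i => by ring

lemma tsum_sq_sub_mul_le (hw : Summable w) (hw0 : ∀ i, 0 ≤ w i) {a b : ι → ℝ} {D : ℝ}
    (hab : ∀ i, (a i - b i) ^ 2 ≤ D) :
    ∑' i, (a i - b i) ^ 2 * w i ≤ D * (∑' i, w i - ∑' i : {i // a i = b i}, w i) := by
  set E : Set ι := {i | a i = b i}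
  have hE : ∑' i : {i // a i = b i}, w i = ∑' i, E.indicator w i := tsum_subtype E w
  have hsq : Summable fun i => (a i - b i) ^ 2 * w i :=
    .of_nonneg_of_le (fun i => mul_nonneg (sq_nonneg _) (hw0 i))
      (fun i => mul_le_mul_of_nonneg_right (hab i) (hw0 i)) (hw.mul_left D)
  rw [hE, ← hw.tsum_sub (hw.indicator E), ← tsum_mul_left]
  refine hsq.tsum_le_tsum (fun i => ?_) ((hw.sub (hw.indicator E)).mul_left D)
  by_cases hi : i ∈ E
  · simp [Set.indicator_of_mem hi, show a i = b i from hi]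
  · rw [Set.indicator_of_notMem hi, sub_zero]
    exact mul_le_mul_of_nonneg_right (hab i) (hw0 i)

end WeightedSums

lemma limsup_div_le_of_le_mul_add {α : Type*} {l : Filter α} [l.NeBot] {T S : α → ℝ} {c K : ℝ}
    (hT : ∀ᶠ x in l, 0 ≤ T x) (hS : Tendsto S l atTop) (h : ∀ᶠ x in l, T x ≤ c * S x + K) :
    limsup (fun x => T x / S x) l ≤ c := by
  have hlim : Tendsto (fun x => c + K / S x) l (𝓝 c) := by
    simpa using tendsto_const_nhds.add (tendsto_const_nhds.div_atTop hS)
  have hle : ∀ᶠ x in l, T x / S x ≤ c + K / S x := by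
    filter_upwards [h, hS.eventually_gt_atTop 0] with x hx hSx
    rw [div_le_iff₀ hSx, add_mul, div_mul_cancel₀ _ hSx.ne']
    linarith
  have hcobdd : IsCoboundedUnder (· ≤ ·) l fun x => T x / S x :=
    isCoboundedUnder_le_of_eventually_le l (x := 0) <|
      (hT.and (hS.eventually_gt_atTop 0)).mono fun x hx => div_nonneg hx.1 hx.2.le
  exact (limsup_le_limsup hle hcobdd hlim.isBoundedUnder_le).trans_eq hlim.limsup_eq

lemma Nat.Primes.summable_rpow_neg {s : ℝ} (hs : 1 < s) :
    Summable fun p : Nat.Primes => ((p : ℕ) : ℝ) ^ (-s) :=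
  Nat.Primes.summable_rpow.mpr (by linarith)

lemma Nat.Primes.rpow_nonneg (s : ℝ) (p : Nat.Primes) : 0 ≤ ((p : ℕ) : ℝ) ^ (-s) :=
  Real.rpow_nonneg (Nat.cast_nonneg _) _

/-- Each partial sum of the divergent series `Σ_p 1/p` is continuous in the exponent, hence a
lower bound for `Σ_p p^{-s}` near `1`. -/
lemma Nat.Primes.tendsto_tsum_rpow_neg_nhdsGT_one :
    Tendsto (fun s : ℝ => ∑' p : Nat.Primes, ((p : ℕ) : ℝ) ^ (-s)) (𝓝[>] 1) atTop := by
  refine tendsto_atTop.mpr fun M => ?_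
  obtain ⟨F, hF⟩ : ∃ F : Finset Nat.Primes, M < ∑ p ∈ F, ((p : ℕ) : ℝ) ^ (-(1 : ℝ)) := by
    by_contra! h
    exact (lt_irrefl (-1 : ℝ)) (Nat.Primes.summable_rpow.mp <|
      summable_of_sum_le (fun p => Nat.Primes.rpow_nonneg 1 p) h)
  have hcont : Continuous fun s : ℝ => ∑ p ∈ F, ((p : ℕ) : ℝ) ^ (-s) :=
    continuous_finsetSum _ fun p _ =>
      (Real.continuous_const_rpow (Nat.cast_ne_zero.mpr p.prop.ne_zero)).comp continuous_neg
  filter_upwards [(hcont.tendsto 1).mono_left nhdsWithin_le_nhds |>.eventually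
    (eventually_gt_nhds hF), self_mem_nhdsWithin] with s hs hs1
  exact hs.le.trans ((Nat.Primes.summable_rpow_neg hs1).sum_le_tsum F
    fun p _ => Nat.Primes.rpow_nonneg s p)

theorem statement6_general (a b : Nat.Primes → ℝ)
    (ha : ∀ p : Nat.Primes, |a p| ≤ 2) (hb : ∀ p : Nat.Primes, |b p| ≤ 2)
    (h3 : (fun s : ℝ => ∑' p : Nat.Primes, (a p ^ 2 - 1) * ((p : ℕ) : ℝ) ^ (-s))
      =O[𝓝[>] (1 : ℝ)] (fun _ => (1 : ℝ)))
    (h4 : (fun s : ℝ => ∑' p : Nat.Primes, (b p ^ 2 - 1) * ((p : ℕ) : ℝ) ^ (-s))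
      =O[𝓝[>] (1 : ℝ)] (fun _ => (1 : ℝ)))
    (h5 : (fun s : ℝ => ∑' p : Nat.Primes, a p * b p * ((p : ℕ) : ℝ) ^ (-s))
      =O[𝓝[>] (1 : ℝ)] (fun _ => (1 : ℝ))) :
    limsup (fun s : ℝ =>
      (∑' p : {p : Nat.Primes // a p = b p}, ((p.1 : ℕ) : ℝ) ^ (-s)) /
        ∑' p : Nat.Primes, ((p : ℕ) : ℝ) ^ (-s)) (𝓝[>] (1 : ℝ)) ≤ 7 / 8 := by
  obtain ⟨c₃, hc₃⟩ := h3.bound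
  obtain ⟨c₄, hc₄⟩ := h4.bound
  obtain ⟨c₅, hc₅⟩ := h5.bound
  refine limsup_div_le_of_le_mul_add (K := (c₃ + c₄ + 2 * c₅) / 16)
    (.of_forall fun s => tsum_nonneg fun p => Nat.Primes.rpow_nonneg s p.1)
    Nat.Primes.tendsto_tsum_rpow_neg_nhdsGT_one ?_
  filter_upwards [hc₃, hc₄, hc₅, self_mem_nhdsWithin] with s h₃ h₄ h₅ hs
  simp only [norm_one, mul_one, Real.norm_eq_abs] at h₃ h₄ h₅
  have hw := Nat.Primes.summable_rpow_neg hs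
  have hexpand := tsum_sq_sub_mul_eq hw (Nat.Primes.rpow_nonneg s) ha hb
  have hsplit := tsum_sq_sub_mul_le hw (Nat.Primes.rpow_nonneg s) (a := a) (b := b) (D := 16)
    fun p => by
      obtain ⟨ha₁, ha₂⟩ := abs_le.mp (ha p)
      obtain ⟨hb₁, hb₂⟩ := abs_le.mp (hb p)
      nlinarith
  linarith [(abs_le.mp h₃).1, (abs_le.mp h₄).1, (abs_le.mp h₅).2]

/-- Remark after Theorem 1 of the paper: If `|a p| ≤ 2`, `|b p| ≤ 2`
for all primes `p`, and as `s → 1⁺` the sums `Σ_p a_p p^{-s}`, `Σ_p b_p p^{-s}`,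
`Σ_p (a_p² - 1) p^{-s}`, `Σ_p (b_p² - 1) p^{-s}` and `Σ_p a_p b_p p^{-s}` are all `O(1)`,
then the set `{p : a_p = b_p}` has analytic density at most `7/8`. -/
theorem statement6 (a b : Nat.Primes → ℝ)
    (ha : ∀ p : Nat.Primes, |a p| ≤ 2) (hb : ∀ p : Nat.Primes, |b p| ≤ 2)
    (h1 : (fun s : ℝ => ∑' p : Nat.Primes, a p * ((p : ℕ) : ℝ) ^ (-s))
      =O[𝓝[>] (1 : ℝ)] (fun _ => (1 : ℝ)))
    (h2 : (fun s : ℝ => ∑' p : Nat.Primes, b p * ((p : ℕ) : ℝ) ^ (-s))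
      =O[𝓝[>] (1 : ℝ)] (fun _ => (1 : ℝ)))
    (h3 : (fun s : ℝ => ∑' p : Nat.Primes, (a p ^ 2 - 1) * ((p : ℕ) : ℝ) ^ (-s))
      =O[𝓝[>] (1 : ℝ)] (fun _ => (1 : ℝ)))
    (h4 : (fun s : ℝ => ∑' p : Nat.Primes, (b p ^ 2 - 1) * ((p : ℕ) : ℝ) ^ (-s))
      =O[𝓝[>] (1 : ℝ)] (fun _ => (1 : ℝ)))
    (h5 : (fun s : ℝ => ∑' p : Nat.Primes, a p * b p * ((p : ℕ) : ℝ) ^ (-s))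
      =O[𝓝[>] (1 : ℝ)] (fun _ => (1 : ℝ))) :
    limsup (fun s : ℝ =>
      (∑' p : {p : Nat.Primes // a p = b p}, ((p.1 : ℕ) : ℝ) ^ (-s)) /
        ∑' p : Nat.Primes, ((p : ℕ) : ℝ) ^ (-s)) (𝓝[>] (1 : ℝ)) ≤ 7 / 8 :=
  statement6_general a b ha hb h3 h4 h5
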